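/- arXiv:2001.07794 — 2 statements merged into one kernel-verified Lean document; each statement's English description precedes it below -/
import Mathlib

section
/- Let E be a measurable space, κ a sub-Markov kernel on E, c > 0, and η : E → (0,∞) measurable with ∫_E η(y) κ(x,dy) = c·η(x) for every x ∈ E. Let α be a probability measure on E with 0 < ∫_E η dα < ∞ such that ∫_E κ(x,A) α(dx) = c·α(A) for every measurable A ⊆ E. Then the probability measure β := η*α is invariant for the Doob transform κ̃ of κ: for every measurable A ⊆ E, ∫_E κ̃(x,A) β(dx) = β(A). -/
open MeasureTheory ProbabilityTheory ENNReal

/-! A quasi-stationary distribution `α` with eigenvalue `c` is exactly a measure with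
`κ ∘ₘ α = c • α`. Under the tilted measure `η • α` the Doob weight `(c η(x))⁻¹` cancels the
density `η(x)`, so `∫ κ̃(x, A) (η α)(dx) = c⁻¹ ∫ ∫_A η dκ(x) α(dx) = c⁻¹ (η (κ ∘ₘ α))(A)`,
and `κ ∘ₘ α = c • α` turns this into `(η α)(A)`. -/

namespace ProbabilityTheory.Kernel

variable {E F : Type*} [MeasurableSpace E] [MeasurableSpace F]

lemma comp_eq_of_lintegral_apply {κ : Kernel E F} {α : Measure E} {ν : Measure F}
    (h : ∀ A, MeasurableSet A → ∫⁻ x, κ x A ∂α = ν A) : κ ∘ₘ α = ν := by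
  ext A hA
  rw [Measure.bind_apply hA κ.measurable.aemeasurable, h A hA]

lemma lintegral_withDensity_apply_eq_comp_withDensity_apply (κ : Kernel E F) (α : Measure E)
    {η : F → ℝ≥0∞} (hη : Measurable η) {A : Set F} (hA : MeasurableSet A) :
    ∫⁻ x, (κ x).withDensity η A ∂α = (κ ∘ₘ α).withDensity η A := by
  simp_rw [withDensity_apply _ hA, ← lintegral_indicator hA]
  exact (Measure.lintegral_bind κ.measurable.aemeasurable (hη.indicator hA).aemeasurable).symm

lemma lintegral_doobTransform_apply_withDensity (κ : Kernel E E) {c : ℝ≥0∞} (hc0 : c ≠ 0)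
    (hc : c ≠ ∞) {η : E → ℝ≥0∞} (hηm : Measurable η) (hηpos : ∀ x, η x ≠ 0)
    (hηfin : ∀ x, η x ≠ ∞) (α : Measure E) {A : Set E} (hA : MeasurableSet A) :
    ∫⁻ x, ((c * η x)⁻¹ • (κ x).withDensity η) A ∂α.withDensity η =
      c⁻¹ * (κ ∘ₘ α).withDensity η A := by
  have hκη : Measurable fun x ↦ (κ x).withDensity η A := by
    simp_rw [withDensity_apply _ hA, ← lintegral_indicator hA]
    exact (hηm.indicator hA).lintegral_kernel
  have weight_cancel (x : E) :
      η x * ((c * η x)⁻¹ * (κ x).withDensity η A) = c⁻¹ * (κ x).withDensity η A := by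
    rw [ENNReal.mul_inv (.inl hc0) (.inl hc), mul_comm c⁻¹, ← mul_assoc, ← mul_assoc,
      ENNReal.mul_inv_cancel (hηpos x) (hηfin x), one_mul]
  have hdoob : Measurable fun x ↦ (c * η x)⁻¹ * (κ x).withDensity η A :=
    (hηm.const_mul c).inv.mul hκη
  simp only [Measure.smul_apply, smul_eq_mul]
  rw [lintegral_withDensity_eq_lintegral_mul α hηm hdoob]
  simp only [Pi.mul_apply, weight_cancel]
  rw [lintegral_const_mul _ hκη, lintegral_withDensity_apply_eq_comp_withDensity_apply κ α hηm hA]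

end ProbabilityTheory.Kernel

theorem stmt_3_general {E : Type*} [MeasurableSpace E]
    (κ : Kernel E E)
    (c : ℝ≥0∞) (hc0 : 0 < c) (hc : c < ⊤)
    (η : E → ℝ≥0∞) (hηm : Measurable η)
    (hηpos : ∀ x, 0 < η x) (hηfin : ∀ x, η x < ⊤)
    (α : Measure E)
    (hqsd : ∀ A : Set E, MeasurableSet A → ∫⁻ x, κ x A ∂α = c * α A) :
    ∀ A : Set E, MeasurableSet A →
      ∫⁻ x, ((c * η x)⁻¹ • ((κ x).withDensity η)) A
          ∂((∫⁻ x, η x ∂α)⁻¹ • α.withDensity η) =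
        ((∫⁻ x, η x ∂α)⁻¹ • α.withDensity η) A := by
  intro A hA
  have hcomp : κ ∘ₘ α = c • α := Kernel.comp_eq_of_lintegral_apply hqsd
  rw [lintegral_smul_measure, Kernel.lintegral_doobTransform_apply_withDensity κ hc0.ne' hc.ne
      hηm (fun x ↦ (hηpos x).ne') (fun x ↦ (hηfin x).ne) α hA,
    hcomp, withDensity_smul_measure]
  simp only [Measure.smul_apply, smul_eq_mul]
  rw [ENNReal.inv_mul_cancel_left hc0.ne' hc.ne]

/-- If `α` is a quasi-stationary distribution for the sub-Markov kernel `κ` with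
eigenvalue `c` and `η` is the associated positive right eigenfunction, then
`β = η*α` is invariant for the Doob transform of `κ`. -/
theorem stmt_3 {E : Type*} [MeasurableSpace E]
    (κ : Kernel E E) (hκsub : ∀ x, κ x Set.univ ≤ 1)
    (c : ℝ≥0∞) (hc0 : 0 < c) (hc : c < ⊤)
    (η : E → ℝ≥0∞) (hηm : Measurable η)
    (hηpos : ∀ x, 0 < η x) (hηfin : ∀ x, η x < ⊤)
    (heig : ∀ x, ∫⁻ y, η y ∂(κ x) = c * η x)
    (α : Measure E) [IsProbabilityMeasure α]
    (hα0 : 0 < ∫⁻ x, η x ∂α) (hα1 : (∫⁻ x, η x ∂α) < ⊤)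
    (hqsd : ∀ A : Set E, MeasurableSet A → ∫⁻ x, κ x A ∂α = c * α A) :
    ∀ A : Set E, MeasurableSet A →
      ∫⁻ x, ((c * η x)⁻¹ • ((κ x).withDensity η)) A
          ∂((∫⁻ x, η x ∂α)⁻¹ • α.withDensity η) =
        ((∫⁻ x, η x ∂α)⁻¹ • α.withDensity η) A :=
  stmt_3_general κ c hc0 hc η hηm hηpos hηfin α hqsd
end

section
/- Let V : (0,∞) → ℝ and η : (0,∞) → (0,∞) be twice differentiable and λ₀ a real number such that for every x > 0: (1/2)η″(x) − (1/2)V′(x)η′(x) = −λ₀ η(x), η″(x) = −4λ₀ η(x) e^{−V(x)}, and V′(x) > 0. Then for every x > 0, η′(x) = 2λ₀ η(x) (1 − 2e^{−V(x)})/V′(x), and consequently (V − 2 log η)″(x) = V″(x) + 8λ₀ e^{−V(x)} + 8λ₀² ((1 − 2e^{−V(x)})/V′(x))². -/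
/-!
Substituting `η″ = −4λ₀ η e^{−V}` into the eigenfunction equation leaves an equation that is
linear in `η′`, solvable because `V′ ≠ 0`. Then `(V − 2 log η)″ = V″ − 2 (η″/η − (η′/η)²)`, and both
ratios `η″/η` and `η′/η` are now explicit.
-/

open Filter Topology Real

theorem eq_div_of_eigen_ode_of_second_deriv {η η' η'' v lam e : ℝ}
    (hode : (1/2) * η'' - (1/2) * v * η' = -lam * η) (hsecond : η'' = -4 * lam * η * e)
    (hv : v ≠ 0) :
    η' = 2 * lam * η * (1 - 2 * e) / v := by
  rw [hsecond] at hode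
  rw [eq_div_iff hv]
  linear_combination -2 * hode

theorem hasDerivAt_deriv_sub_mul_log {f g : ℝ → ℝ} {x : ℝ} (c : ℝ)
    (hf : ∀ᶠ t in 𝓝 x, DifferentiableAt ℝ f t)
    (hg : ∀ᶠ t in 𝓝 x, DifferentiableAt ℝ g t ∧ g t ≠ 0)
    (hf' : DifferentiableAt ℝ (deriv f) x) (hg' : DifferentiableAt ℝ (deriv g) x) :
    HasDerivAt (deriv fun t => f t - c * log (g t))
      (deriv (deriv f) x - c * (deriv (deriv g) x / g x - (deriv g x / g x) ^ 2)) x := by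
  have hfirst : deriv (fun t => f t - c * log (g t)) =ᶠ[𝓝 x]
      fun t => deriv f t - c * (deriv g t / g t) := by
    filter_upwards [hf, hg] with t hft ⟨hgt, hne⟩
    rw [deriv_fun_sub hft ((hgt.log hne).const_mul c), deriv_const_mul _ (hgt.log hne),
      deriv.log hgt hne]
  have hgx := hg.self_of_nhds
  have hquot : HasDerivAt (fun t => deriv g t / g t)
      ((deriv (deriv g) x * g x - deriv g x * deriv g x) / g x ^ 2) x :=
    hg'.hasDerivAt.div hgx.1.hasDerivAt hgx.2
  have hquot_eq : (deriv (deriv g) x * g x - deriv g x * deriv g x) / g x ^ 2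
      = deriv (deriv g) x / g x - (deriv g x / g x) ^ 2 := by
    field_simp [hgx.2]
  rw [hquot_eq] at hquot
  exact (hf'.hasDerivAt.sub (hquot.const_mul c)).congr_of_eventuallyEq hfirst

theorem stmt_9_general (V η : ℝ → ℝ) (lam₀ : ℝ)
    (hηpos : ∀ x ∈ Set.Ioi (0:ℝ), 0 < η x)
    (hV2 : ∀ x ∈ Set.Ioi (0:ℝ), DifferentiableAt ℝ (deriv V) x)
    (hη1 : ∀ x ∈ Set.Ioi (0:ℝ), DifferentiableAt ℝ η x)
    (hη2 : ∀ x ∈ Set.Ioi (0:ℝ), DifferentiableAt ℝ (deriv η) x)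
    (hode : ∀ x ∈ Set.Ioi (0:ℝ),
      (1/2) * deriv (deriv η) x - (1/2) * deriv V x * deriv η x = -lam₀ * η x)
    (hsecond : ∀ x ∈ Set.Ioi (0:ℝ),
      deriv (deriv η) x = -4 * lam₀ * η x * Real.exp (-V x))
    (hV' : ∀ x ∈ Set.Ioi (0:ℝ), 0 < deriv V x) :
    ∀ x ∈ Set.Ioi (0:ℝ),
      deriv η x = 2 * lam₀ * η x * (1 - 2 * Real.exp (-V x)) / deriv V x ∧
      deriv (deriv fun t => V t - 2 * Real.log (η t)) x =
        deriv (deriv V) x + 8 * lam₀ * Real.exp (-V x) +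
          8 * lam₀ ^ 2 * ((1 - 2 * Real.exp (-V x)) / deriv V x) ^ 2 := by
  intro x hx
  have hη' := eq_div_of_eigen_ode_of_second_deriv (hode x hx) (hsecond x hx) (hV' x hx).ne'
  refine ⟨hη', ?_⟩
  have hnhds : ∀ᶠ t in 𝓝 x, t ∈ Set.Ioi (0:ℝ) := isOpen_Ioi.mem_nhds hx
  -- `V′ > 0` already forces `V` to be differentiable, since `deriv` is `0` at non-differentiable points.
  have hV : ∀ᶠ t in 𝓝 x, DifferentiableAt ℝ V t := hnhds.mono fun t ht =>
    differentiableAt_of_deriv_ne_zero (hV' t ht).ne'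
  have hη : ∀ᶠ t in 𝓝 x, DifferentiableAt ℝ η t ∧ η t ≠ 0 := hnhds.mono fun t ht =>
    ⟨hη1 t ht, (hηpos t ht).ne'⟩
  have hηx := (hηpos x hx).ne'
  have hlogderiv : deriv η x / η x = 2 * lam₀ * ((1 - 2 * exp (-V x)) / deriv V x) := by
    rw [hη']; field_simp
  have hratio : deriv (deriv η) x / η x = -4 * lam₀ * exp (-V x) := by
    rw [hsecond x hx]; field_simp
  rw [(hasDerivAt_deriv_sub_mul_log 2 hV hη (hV2 x hx) (hη2 x hx)).deriv, hlogderiv, hratio]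
  ring

/-- Under the eigenfunction ODE `(1/2)η″ − (1/2)V′η′ = −λ₀η`, the identity
`η″ = −4λ₀ η e^{−V}`, and `V′ > 0` on `(0,∞)`, one has
`η′ = 2λ₀ η (1 − 2e^{−V})/V′` and
`(V − 2 log η)″ = V″ + 8λ₀ e^{−V} + 8λ₀²((1 − 2e^{−V})/V′)²` on `(0,∞)`. -/
theorem stmt_9 (V η : ℝ → ℝ) (lam₀ : ℝ)
    (hηpos : ∀ x ∈ Set.Ioi (0:ℝ), 0 < η x)
    (hV1 : ∀ x ∈ Set.Ioi (0:ℝ), DifferentiableAt ℝ V x)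
    (hV2 : ∀ x ∈ Set.Ioi (0:ℝ), DifferentiableAt ℝ (deriv V) x)
    (hη1 : ∀ x ∈ Set.Ioi (0:ℝ), DifferentiableAt ℝ η x)
    (hη2 : ∀ x ∈ Set.Ioi (0:ℝ), DifferentiableAt ℝ (deriv η) x)
    (hode : ∀ x ∈ Set.Ioi (0:ℝ),
      (1/2) * deriv (deriv η) x - (1/2) * deriv V x * deriv η x = -lam₀ * η x)
    (hsecond : ∀ x ∈ Set.Ioi (0:ℝ),
      deriv (deriv η) x = -4 * lam₀ * η x * Real.exp (-V x))
    (hV' : ∀ x ∈ Set.Ioi (0:ℝ), 0 < deriv V x) :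
    ∀ x ∈ Set.Ioi (0:ℝ),
      deriv η x = 2 * lam₀ * η x * (1 - 2 * Real.exp (-V x)) / deriv V x ∧
      deriv (deriv fun t => V t - 2 * Real.log (η t)) x =
        deriv (deriv V) x + 8 * lam₀ * Real.exp (-V x) +
          8 * lam₀ ^ 2 * ((1 - 2 * Real.exp (-V x)) / deriv V x) ^ 2 :=
  stmt_9_general V η lam₀ hηpos hV2 hη1 hη2 hode hsecond hV'
end
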